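/- Fix n ≥ 1 and let λ_1, λ_2 ∈ ℝ with λ_1λ_2 ≥ 0 and |λ_1| ≤ |λ_2|. Then for every monic hyperbolic polynomial P of degree n, the roots of the polynomial x ↦ P(x+λ_1) − λ_1P′(x+λ_1) are majorized by the roots of x ↦ P(x+λ_2) − λ_2P′(x+λ_2). -/

import Mathlib

open Polynomial Finset

/-- Classical majorization of `n`-tuples via convex functions. -/
def MajorizedOn (n : ℕ) (x y : ℕ → ℝ) : Prop :=
  ∀ f : ℝ → ℝ, ConvexOn ℝ Set.univ f →
    ∑ i ∈ Finset.range n, f (x i) ≤ ∑ i ∈ Finset.range n, f (y i)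

/-! The roots `y` of `P` are the diagonal of the real symmetric matrix
`M(t) = diag y + t (J - 1)`, whose characteristic polynomial is `P(x + t) - t P'(x + t)`
(`M(t)` is a diagonal matrix plus a rank-one matrix, so the matrix determinant lemma applies).
If `λ₁ = s λ₂` with `0 ≤ s ≤ 1`, then `M(λ₁) = s M(λ₂) + (1 - s) diag y`. In an eigenbasis of
`M(λ₁)` this writes each eigenvalue of `M(λ₁)` as `s a + (1 - s) b`, where `a` and `b` are
diagonal entries of unitary conjugates of `M(λ₂)` and `diag y`. By Schur's theorem (the diagonal
of a Hermitian matrix is the image of its spectrum under the doubly stochastic matrix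
`(|U i j|²)`), for convex `f` this gives
`∑ f(eig M(λ₁)) ≤ s ∑ f(eig M(λ₂)) + (1 - s) ∑ f(y) ≤ ∑ f(eig M(λ₂))`,
the last step being Schur's theorem for `M(λ₂)`, whose diagonal is `y`. -/

open Matrix

@[to_additive]
theorem Fin.prod_range_extend_val {α M : Type*} [CommMonoid M] {m : ℕ} (μ : Fin m → α)
    (e : ℕ → α) (g : α → M) :
    ∏ i ∈ range m, g (Function.extend Fin.val μ e i) = ∏ i, g (μ i) := by
  rw [← Fin.prod_univ_eq_prod_range]
  simp [Fin.val_injective.extend_apply]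

section Spectral

variable {n 𝕜 : Type*} [Fintype n] [DecidableEq n] [RCLike 𝕜]

theorem ConvexOn.sum_mulVec_le_of_mem_doublyStochastic {s : Set ℝ} {f : ℝ → ℝ}
    (hf : ConvexOn ℝ s f) {M : Matrix n n ℝ} (hM : M ∈ doublyStochastic ℝ n) {x : n → ℝ}
    (hx : ∀ i, x i ∈ s) :
    ∑ i, f ((M *ᵥ x) i) ≤ ∑ i, f (x i) := by
  obtain ⟨hnonneg, hrow, hcol⟩ := mem_doublyStochastic_iff_sum.mp hM
  calc ∑ i, f ((M *ᵥ x) i)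
      ≤ ∑ i, ∑ j, M i j * f (x j) := by
        gcongr with i
        simpa only [mulVec, dotProduct, smul_eq_mul] using
          hf.map_sum_le (fun j _ => hnonneg i j) (hrow i) (fun j _ => hx j)
    _ = ∑ j, f (x j) := by
        rw [sum_comm]
        simp_rw [← sum_mul, hcol, one_mul]

theorem Matrix.norm_sq_entries_mem_doublyStochastic {U : Matrix n n 𝕜}
    (hU : U ∈ unitaryGroup n 𝕜) :
    (of fun i j => ‖U i j‖ ^ 2) ∈ doublyStochastic ℝ n := by
  have hcol : ∀ {V : Matrix n n 𝕜}, star V * V = 1 → ∀ j, ∑ i, ‖V i j‖ ^ 2 = 1 := by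
    intro V hV j
    have := congrFun (congrFun hV j) j
    simp only [mul_apply, star_apply, one_apply_eq, RCLike.star_def, RCLike.conj_mul] at this
    exact_mod_cast this
  refine mem_doublyStochastic_iff_sum.mpr
    ⟨fun i j => by simp only [of_apply]; positivity, fun i => ?_, hcol hU.1⟩
  simpa using hcol (V := star U) (by simpa using hU.2) i

theorem Matrix.IsHermitian.sum_convexOn_re_diag_le {A : Matrix n n 𝕜} (hA : A.IsHermitian)
    {f : ℝ → ℝ} (hf : ConvexOn ℝ Set.univ f) :
    ∑ i, f (RCLike.re (A i i)) ≤ ∑ i, f (hA.eigenvalues i) := by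
  set U : Matrix n n 𝕜 := ↑hA.eigenvectorUnitary
  have hdiag : ∀ i, RCLike.re (A i i) = ((of fun i j => ‖U i j‖ ^ 2) *ᵥ hA.eigenvalues) i := by
    intro i
    conv_lhs => rw [hA.spectral_theorem]
    simp only [Unitary.conjStarAlgAut_apply, mul_apply, diagonal_apply, Function.comp_apply,
      mul_ite, mul_zero, sum_ite_eq', mem_univ, ↓reduceIte, star_apply, RCLike.star_def, map_sum,
      RCLike.mul_re, RCLike.ofReal_re, RCLike.ofReal_im, sub_zero, RCLike.conj_re, RCLike.mul_im,
      zero_add, RCLike.conj_im, mul_neg, sub_neg_eq_add, mulVec, dotProduct, of_apply]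
    exact sum_congr rfl fun j _ => by rw [RCLike.norm_sq_eq_def]; ring
  simpa only [hdiag] using hf.sum_mulVec_le_of_mem_doublyStochastic
    (norm_sq_entries_mem_doublyStochastic hA.eigenvectorUnitary.2) fun _ => trivial

theorem Matrix.IsHermitian.eigenvalues_unitary_conj {A : Matrix n n 𝕜} (hA : A.IsHermitian)
    (U : unitaryGroup n 𝕜) (hUA : (star (U : Matrix n n 𝕜) * A * U).IsHermitian) :
    hUA.eigenvalues = hA.eigenvalues := by
  rw [hUA.eigenvalues_eq_eigenvalues_iff hA, charpoly_mul_comm, ← mul_assoc,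
    mem_unitaryGroup_iff.mp U.2, one_mul]

theorem Matrix.IsHermitian.sum_comp_eigenvalues_eq_of_charpoly_eq {A : Matrix n n 𝕜}
    (hA : A.IsHermitian) {a : n → ℝ} (hchar : A.charpoly = ∏ i, (X - C (a i : 𝕜))) (g : ℝ → ℝ) :
    ∑ i, g (hA.eigenvalues i) = ∑ i, g (a i) := by
  have hroots : univ.val.map (RCLike.ofReal ∘ hA.eigenvalues) =
      univ.val.map (RCLike.ofReal ∘ a : n → 𝕜) := by
    rw [← hA.roots_charpoly_eq_eigenvalues, hchar,
      ← roots_multiset_prod_X_sub_C (univ.val.map (RCLike.ofReal ∘ a : n → 𝕜))]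
    simp only [Function.comp_apply, Multiset.map_map, prod_map_val]
  simpa [Multiset.map_map, Function.comp_def] using
    congrArg (fun s : Multiset 𝕜 => (s.map (g ∘ RCLike.re)).sum) hroots

theorem Matrix.IsHermitian.sum_convexOn_eigenvalues_le_of_eq_smul_add_smul
    {A B C : Matrix n n 𝕜} (hA : A.IsHermitian) (hB : B.IsHermitian) (hC : C.IsHermitian)
    {s : ℝ} (hs₀ : 0 ≤ s) (hs₁ : s ≤ 1) (hABC : A = s • B + (1 - s) • C) {f : ℝ → ℝ}
    (hf : ConvexOn ℝ Set.univ f) :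
    ∑ i, f (hA.eigenvalues i) ≤
      s * ∑ i, f (hB.eigenvalues i) + (1 - s) * ∑ i, f (hC.eigenvalues i) := by
  subst hABC
  set U := hA.eigenvectorUnitary
  set B' := star (U : Matrix n n 𝕜) * B * U
  set C' := star (U : Matrix n n 𝕜) * C * U
  have hB' : B'.IsHermitian := isHermitian_conjTranspose_mul_mul _ hB
  have hC' : C'.IsHermitian := isHermitian_conjTranspose_mul_mul _ hC
  have hdiag : ∀ i,
      hA.eigenvalues i = s * RCLike.re (B' i i) + (1 - s) * RCLike.re (C' i i) := by
    intro i
    have h := hA.conjStarAlgAut_star_eigenvectorUnitary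
    rw [Unitary.conjStarAlgAut_star_apply] at h
    have := congrArg (fun M => RCLike.re (M i i)) h
    simp only [Matrix.mul_add, Algebra.mul_smul_comm, Matrix.add_mul, Algebra.smul_mul_assoc,
      add_apply, smul_apply, map_add, RCLike.smul_re, diagonal_apply_eq, Function.comp_apply,
      RCLike.ofReal_re] at this
    exact this.symm
  calc ∑ i, f (hA.eigenvalues i)
      ≤ ∑ i, (s * f (RCLike.re (B' i i)) + (1 - s) * f (RCLike.re (C' i i))) := by
        gcongr with i
        rw [hdiag i]
        exact hf.2 trivial trivial hs₀ (sub_nonneg.mpr hs₁) (add_sub_cancel s 1)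
    _ ≤ s * ∑ i, f (hB.eigenvalues i) + (1 - s) * ∑ i, f (hC.eigenvalues i) := by
        rw [sum_add_distrib, ← mul_sum, ← mul_sum, ← hB.eigenvalues_unitary_conj U hB',
          ← hC.eigenvalues_unitary_conj U hC']
        exact add_le_add (mul_le_mul_of_nonneg_left (hB'.sum_convexOn_re_diag_le hf) hs₀)
          (mul_le_mul_of_nonneg_left (hC'.sum_convexOn_re_diag_le hf) (sub_nonneg.mpr hs₁))

end Spectral

section Determinant

variable {n : Type*} [Fintype n] [DecidableEq n]

theorem Matrix.det_diagonal_add_const_of_field {K : Type*} [Field K] {d : n → K}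
    (hd : ∀ i, d i ≠ 0) (c : K) :
    (diagonal d + of fun _ _ => c).det = ∏ i, d i + c * ∑ i, ∏ j ∈ univ.erase i, d j := by
  have hrank_one : (of fun _ _ => c : Matrix n n K) =
      replicateCol Unit (fun _ : n => c) * replicateRow Unit (fun _ : n => (1 : K)) := by
    ext i j
    simp [mul_apply]
  have hunit : IsUnit (diagonal d).det := by
    rw [det_diagonal]
    exact (prod_ne_zero_iff.mpr fun i _ => hd i).isUnit
  have hinv : (diagonal d)⁻¹ = diagonal fun i => (d i)⁻¹ :=
    inv_eq_right_inv (by rw [diagonal_mul_diagonal]; simp [hd])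
  rw [hrank_one, det_add_replicateCol_mul_replicateRow hunit, det_diagonal, det_unique, hinv]
  simp only [PUnit.default_eq_unit, add_apply, one_apply_eq, mul_apply, replicateRow_apply,
    diagonal_apply, mul_ite, one_mul, mul_zero, sum_ite_eq', mem_univ, ↓reduceIte,
    replicateCol_apply]
  rw [mul_add, mul_one, mul_sum, mul_sum]
  congr 1
  refine sum_congr rfl fun i _ => ?_
  rw [← mul_prod_erase univ d (mem_univ i)]
  field_simp [hd i]

theorem Matrix.det_diagonal_add_const {R : Type*} [CommRing R] [IsDomain R] {d : n → R}
    (hd : ∀ i, d i ≠ 0) (c : R) :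
    (diagonal d + of fun _ _ => c).det = ∏ i, d i + c * ∑ i, ∏ j ∈ univ.erase i, d j := by
  let φ := algebraMap R (FractionRing R)
  have hφ : Function.Injective φ := IsFractionRing.injective R (FractionRing R)
  apply hφ
  have hmap : φ.mapMatrix (diagonal d + of fun _ _ => c) =
      diagonal (fun i => φ (d i)) + of fun _ _ => φ c := by
    ext i j
    by_cases h : i = j <;> simp [h]
  rw [RingHom.map_det, hmap,
    det_diagonal_add_const_of_field (fun i => (map_ne_zero_iff φ hφ).mpr (hd i))]
  simp only [map_add, map_mul, map_prod, map_sum]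

end Determinant

section PencilMatrix

variable {n R : Type*} [DecidableEq n] [CommRing R]

def pencilMatrix (y : n → R) (t : R) : Matrix n n R :=
  diagonal y + t • (of (fun _ _ => 1) - 1)

theorem isHermitian_pencilMatrix (y : n → ℝ) (t : ℝ) : (pencilMatrix y t).IsHermitian := by
  ext i j
  by_cases h : i = j
  · simp [pencilMatrix, h]
  · simp [pencilMatrix, h, Ne.symm h]

theorem pencilMatrix_apply_self (y : n → R) (t : R) (i : n) : pencilMatrix y t i i = y i := by
  simp [pencilMatrix]

theorem pencilMatrix_mul_eq_smul_add_smul (y : n → R) (s t : R) :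
    pencilMatrix y (s * t) = s • pencilMatrix y t + (1 - s) • diagonal y := by
  simp only [pencilMatrix, smul_add, smul_smul, sub_smul, one_smul]
  abel

variable [Fintype n]

theorem charmatrix_pencilMatrix (y : n → R) (t : R) :
    charmatrix (pencilMatrix y t) = diagonal (fun i => X - C (y i - t)) + of fun _ _ => -C t := by
  ext i j
  by_cases h : i = j
  · subst h
    simp [pencilMatrix]
    ring
  · simp [pencilMatrix, h]

theorem prod_X_sub_C_sub_C_mul_derivative_comp_X_add_C (y : n → R) (t : R) :
    (∏ i, (X - C (y i)) - C t * derivative (∏ i, (X - C (y i)))).comp (X + C t) =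
      ∏ i, (X - C (y i - t)) + -C t * ∑ i, ∏ j ∈ univ.erase i, (X - C (y j - t)) := by
  simp_rw [derivative_prod_finset, derivative_X_sub_C, mul_one]
  simp only [sub_comp, Polynomial.prod_comp, X_comp, C_comp, mul_comp, Polynomial.sum_comp,
    map_sub, sub_sub_eq_add_sub, neg_mul, ← sub_eq_add_neg]

theorem charpoly_pencilMatrix [IsDomain R] (y : n → R) (t : R) :
    (pencilMatrix y t).charpoly =
      (∏ i, (X - C (y i)) - C t * derivative (∏ i, (X - C (y i)))).comp (X + C t) := by
  rw [charpoly, charmatrix_pencilMatrix, det_diagonal_add_const fun i => X_sub_C_ne_zero _,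
    prod_X_sub_C_sub_C_mul_derivative_comp_X_add_C]

theorem sum_convexOn_eigenvalues_pencilMatrix_le (y : n → ℝ) {t₁ t₂ : ℝ}
    (hsign : 0 ≤ t₁ * t₂) (habs : |t₁| ≤ |t₂|) {f : ℝ → ℝ} (hf : ConvexOn ℝ Set.univ f) :
    ∑ i, f ((isHermitian_pencilMatrix y t₁).eigenvalues i) ≤
      ∑ i, f ((isHermitian_pencilMatrix y t₂).eigenvalues i) := by
  rcases eq_or_ne t₂ 0 with rfl | ht₂
  · obtain rfl : t₁ = 0 := abs_nonpos_iff.mp (by simpa using habs)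
    rfl
  obtain ⟨s, rfl⟩ : ∃ s, t₁ = s * t₂ := ⟨t₁ / t₂, (div_mul_cancel₀ t₁ ht₂).symm⟩
  have hs₀ : 0 ≤ s :=
    nonneg_of_mul_nonneg_left (by simpa [mul_assoc, ← sq] using hsign) (by positivity)
  have hs₁ : s ≤ 1 := (le_abs_self s).trans <|
    le_of_mul_le_mul_right (by rwa [one_mul, ← abs_mul]) (abs_pos.mpr ht₂)
  set μ := (isHermitian_pencilMatrix y t₂).eigenvalues
  have hdiag : ∑ i, f ((isHermitian_diagonal y).eigenvalues i) = ∑ i, f (y i) :=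
    (isHermitian_diagonal y).sum_comp_eigenvalues_eq_of_charpoly_eq (charpoly_diagonal y) f
  have hschur : ∑ i, f (y i) ≤ ∑ i, f (μ i) := by
    simpa [pencilMatrix_apply_self] using
      (isHermitian_pencilMatrix y t₂).sum_convexOn_re_diag_le hf
  calc ∑ i, f ((isHermitian_pencilMatrix y (s * t₂)).eigenvalues i)
      ≤ s * ∑ i, f (μ i) + (1 - s) * ∑ i, f ((isHermitian_diagonal y).eigenvalues i) :=
        (isHermitian_pencilMatrix _ _).sum_convexOn_eigenvalues_le_of_eq_smul_add_smul _ _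
          hs₀ hs₁ (pencilMatrix_mul_eq_smul_add_smul y s t₂) hf
    _ ≤ s * ∑ i, f (μ i) + (1 - s) * ∑ i, f (μ i) := by
        rw [hdiag]
        gcongr
    _ = ∑ i, f (μ i) := by ring

end PencilMatrix

theorem deformed_pencil_monotone_general
    (n : ℕ) (lam₁ lam₂ : ℝ)
    (hsign : 0 ≤ lam₁ * lam₂) (habs : |lam₁| ≤ |lam₂|)
    (x : ℕ → ℝ) (P : Polynomial ℝ)
    (hP : P = ∏ i ∈ Finset.range n, (X - C (x i))) :
    ∃ u v : ℕ → ℝ,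
      (P - C lam₁ * derivative P).comp (X + C lam₁) =
        ∏ i ∈ Finset.range n, (X - C (u i)) ∧
      (P - C lam₂ * derivative P).comp (X + C lam₂) =
        ∏ i ∈ Finset.range n, (X - C (v i)) ∧
      MajorizedOn n u v := by
  let y : Fin n → ℝ := fun i => x i
  let μ (t : ℝ) : Fin n → ℝ := (isHermitian_pencilMatrix y t).eigenvalues
  have hroots (t : ℝ) : (P - C t * derivative P).comp (X + C t) = ∏ i, (X - C (μ t i)) := by
    rw [hP, ← Fin.prod_univ_eq_prod_range, ← charpoly_pencilMatrix,
      (isHermitian_pencilMatrix y t).charpoly_eq]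
    rfl
  refine ⟨Function.extend Fin.val (μ lam₁) 0, Function.extend Fin.val (μ lam₂) 0, ?_, ?_,
    fun f hf => ?_⟩
  · exact (hroots lam₁).trans (Fin.prod_range_extend_val _ _ fun a => X - C a).symm
  · exact (hroots lam₂).trans (Fin.prod_range_extend_val _ _ fun a => X - C a).symm
  · rw [Fin.sum_range_extend_val _ _ f, Fin.sum_range_extend_val _ _ f]
    exact sum_convexOn_eigenvalues_pencilMatrix_le y hsign habs hf

/-- Theorem (main2): if `λ₁λ₂ ≥ 0` and `|λ₁| ≤ |λ₂|`, then the roots of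
`(1-λ₁D)e^{λ₁D}P`, i.e. of `x ↦ P(x+λ₁) - λ₁P'(x+λ₁)`, are majorized by those of
`(1-λ₂D)e^{λ₂D}P`. -/
theorem deformed_pencil_monotone
    (n : ℕ) (hn : 1 ≤ n) (lam₁ lam₂ : ℝ)
    (hsign : 0 ≤ lam₁ * lam₂) (habs : |lam₁| ≤ |lam₂|)
    (x : ℕ → ℝ) (P : Polynomial ℝ)
    (hP : P = ∏ i ∈ Finset.range n, (X - C (x i))) :
    ∃ u v : ℕ → ℝ,
      (P - C lam₁ * derivative P).comp (X + C lam₁) =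
        ∏ i ∈ Finset.range n, (X - C (u i)) ∧
      (P - C lam₂ * derivative P).comp (X + C lam₂) =
        ∏ i ∈ Finset.range n, (X - C (v i)) ∧
      MajorizedOn n u v :=
  deformed_pencil_monotone_general n lam₁ lam₂ hsign habs x P hP
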